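/- arXiv:2304.13351 — 2 statements merged into one kernel-verified Lean document; each statement's English description precedes it below -/
import Mathlib

section
/- For every pair of natural numbers n, m and every constant 𝔠 > 0 there exists a constant C > 0 (depending only on n, m and 𝔠) such that for all N ≥ 1 one has ‖[(E_-^N)^n, (E_+^N)^m]‖ ≤ C/N. -/
open scoped BigOperators

/-- Pauli matrices. -/
noncomputable def pauliX : Matrix (Fin 2) (Fin 2) ℂ := !![0, 1; 1, 0]
noncomputable def pauliY : Matrix (Fin 2) (Fin 2) ℂ := !![0, -Complex.I; Complex.I, 0]
noncomputable def pauliZ : Matrix (Fin 2) (Fin 2) ℂ := !![1, 0; 0, -1]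

/-- The operator `A` acting on the `k`-th tensor factor of `(ℂ²)^{⊗N}` (identity elsewhere),
realized as a matrix indexed by the product basis `Fin N → Fin 2`. -/
noncomputable def siteOp (N : ℕ) (A : Matrix (Fin 2) (Fin 2) ℂ) (k : Fin N) :
    Matrix (Fin N → Fin 2) (Fin N → Fin 2) ℂ :=
  fun x y => A (x k) (y k) * ∏ j ∈ Finset.univ.erase k, (if x j = y j then (1 : ℂ) else 0)

/-- Collective spin operator `(1/2) Σ_k A^{(k)}`. -/
noncomputable def collSpin (N : ℕ) (A : Matrix (Fin 2) (Fin 2) ℂ) :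
    Matrix (Fin N → Fin 2) (Fin N → Fin 2) ℂ :=
  (1 / 2 : ℂ) • ∑ k : Fin N, siteOp N A k

noncomputable def Sx (N : ℕ) := collSpin N pauliX
noncomputable def Sy (N : ℕ) := collSpin N pauliY
noncomputable def Sz (N : ℕ) := collSpin N pauliZ
noncomputable def Splus (N : ℕ) := Sx N + Complex.I • Sy N
noncomputable def Sminus (N : ℕ) := Sx N - Complex.I • Sy N

/-- The operator norm (ℓ²→ℓ²) of a square complex matrix. -/
noncomputable def opNorm {n : Type*} [Fintype n] [DecidableEq n] (M : Matrix n n ℂ) : ℝ :=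
  ‖Matrix.toEuclideanCLM (𝕜 := ℂ) M‖

open Kronecker

/-- The momentum fluctuation operator `p^N = S_z⊗𝕀 − 𝕀⊗S_z` on the doubled (GNS) space. -/
noncomputable def pN (N : ℕ) :
    Matrix ((Fin N → Fin 2) × (Fin N → Fin 2)) ((Fin N → Fin 2) × (Fin N → Fin 2)) ℂ :=
  Sz N ⊗ₖ (1 : Matrix (Fin N → Fin 2) (Fin N → Fin 2) ℂ)
    - (1 : Matrix (Fin N → Fin 2) (Fin N → Fin 2) ℂ) ⊗ₖ Sz N

/-- The rescaled phase operator `E_+^N = (S_+^N ⊗ 𝕀)/(𝔠 N)`. -/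
noncomputable def Eplus (N : ℕ) (c : ℝ) :
    Matrix ((Fin N → Fin 2) × (Fin N → Fin 2)) ((Fin N → Fin 2) × (Fin N → Fin 2)) ℂ :=
  ((c : ℂ) * N)⁻¹ • (Splus N ⊗ₖ (1 : Matrix (Fin N → Fin 2) (Fin N → Fin 2) ℂ))

/-- The rescaled phase operator `E_-^N = (S_-^N ⊗ 𝕀)/(𝔠 N)`. -/
noncomputable def Eminus (N : ℕ) (c : ℝ) :
    Matrix ((Fin N → Fin 2) × (Fin N → Fin 2)) ((Fin N → Fin 2) × (Fin N → Fin 2)) ℂ :=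
  ((c : ℂ) * N)⁻¹ • (Sminus N ⊗ₖ (1 : Matrix (Fin N → Fin 2) (Fin N → Fin 2) ℂ))



set_option synthInstance.maxHeartbeats 1000000
set_option maxHeartbeats 1000000
open scoped Matrix

lemma siteOp_mul_same (N : ℕ) (A B : Matrix (Fin 2) (Fin 2) ℂ) (k : Fin N) :
    siteOp N A k * siteOp N B k = siteOp N (A * B) k := by
  ext x y
  rw [Matrix.mul_apply]
  have hinj : Function.Injective (Function.update x k) := fun a b h => by
    have := congrFun h k; simpa using this
  have hsub : ((Finset.univ : Finset (Fin 2)).image (Function.update x k)) ⊆ Finset.univ :=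
    Finset.subset_univ _
  have hvan : ∀ z ∈ (Finset.univ : Finset (Fin N → Fin 2)),
      z ∉ (Finset.univ : Finset (Fin 2)).image (Function.update x k) →
      siteOp N A k x z * siteOp N B k z y = 0 := by
    intro z _ hz
    have : ∃ j, j ≠ k ∧ x j ≠ z j := by
      by_contra h
      push_neg at h
      apply hz
      refine Finset.mem_image.mpr ⟨z k, Finset.mem_univ _, ?_⟩
      funext j
      by_cases hj : j = k
      · subst hj; simp
      · rw [Function.update_of_ne hj]
        exact h j hj
    obtain ⟨j, hjk, hxz⟩ := this
    have hp : (∏ j ∈ Finset.univ.erase k, if x j = z j then (1:ℂ) else 0) = 0 :=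
      Finset.prod_eq_zero (Finset.mem_erase.mpr ⟨hjk, Finset.mem_univ _⟩) (if_neg hxz)
    unfold siteOp
    rw [hp, mul_zero, zero_mul]
  rw [← Finset.sum_subset hsub hvan,
    Finset.sum_image (fun a _ b _ h => hinj h)]
  unfold siteOp
  simp only [Function.update_self]
  have h1 : ∀ a : Fin 2, ∀ j ∈ Finset.univ.erase k,
      (if x j = Function.update x k a j then (1:ℂ) else 0) = 1 := by
    intro a j hj
    rw [Function.update_of_ne (Finset.mem_erase.mp hj).1, if_pos rfl]
  have h2 : ∀ a : Fin 2, ∀ j ∈ Finset.univ.erase k,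
      (if Function.update x k a j = y j then (1:ℂ) else 0)
        = (if x j = y j then (1:ℂ) else 0) := by
    intro a j hj
    rw [Function.update_of_ne (Finset.mem_erase.mp hj).1]
  calc ∑ a : Fin 2, A (x k) a * (∏ j ∈ Finset.univ.erase k,
          if x j = Function.update x k a j then (1:ℂ) else 0) *
        (B a (y k) * ∏ j ∈ Finset.univ.erase k,
          if Function.update x k a j = y j then (1:ℂ) else 0)
      = ∑ a : Fin 2, A (x k) a * B a (y k) *
          ∏ j ∈ Finset.univ.erase k, (if x j = y j then (1:ℂ) else 0) := by
        refine Finset.sum_congr rfl fun a _ => ?_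
        rw [Finset.prod_congr rfl (h1 a), Finset.prod_congr rfl (h2 a), Finset.prod_const_one]
        ring
    _ = (A * B) (x k) (y k) * ∏ j ∈ Finset.univ.erase k, (if x j = y j then (1:ℂ) else 0) := by
        rw [Matrix.mul_apply, Finset.sum_mul]

lemma siteOp_mul_ne (N : ℕ) (A B : Matrix (Fin 2) (Fin 2) ℂ) (k l : Fin N) (hkl : k ≠ l) :
    siteOp N A k * siteOp N B l = fun x y => A (x k) (y k) * B (x l) (y l) *
      ∏ j ∈ (Finset.univ.erase k).erase l, (if x j = y j then (1 : ℂ) else 0) := by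
  funext x y
  rw [Matrix.mul_apply]
  set z₀ : Fin N → Fin 2 := Function.update x k (y k) with hz₀
  rw [Finset.sum_eq_single z₀ ?h0 (by simp)]
  · have e1 : siteOp N A k x z₀ = A (x k) (y k) := by
      unfold siteOp
      rw [hz₀]
      rw [Finset.prod_congr rfl (fun j hj => by
        rw [Function.update_of_ne (Finset.mem_erase.mp hj).1, if_pos rfl]),
        Finset.prod_const_one, Function.update_self, mul_one]
    have e2 : siteOp N B l z₀ y = B (x l) (y l) *
        ∏ j ∈ (Finset.univ.erase l).erase k, (if x j = y j then (1 : ℂ) else 0) := by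
      unfold siteOp
      have hz₀l : z₀ l = x l := Function.update_of_ne (Ne.symm hkl) _ _
      have hk : k ∈ Finset.univ.erase l := Finset.mem_erase.mpr ⟨hkl, Finset.mem_univ _⟩
      rw [← Finset.mul_prod_erase _ _ hk, hz₀l, hz₀, Function.update_self, if_pos rfl, one_mul,
        Finset.prod_congr rfl (fun j hj => by
          rw [Function.update_of_ne (Finset.mem_erase.mp hj).1])]
    rw [e1, e2, Finset.erase_right_comm]
    ring
  · intro z _ hz
    have : ∃ j, z j ≠ z₀ j := by
      by_contra h; push_neg at h; exact hz (funext h)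
    obtain ⟨j, hj⟩ := this
    by_cases hjk : j = k
    · subst hjk
      have hzy : z j ≠ y j := by rwa [hz₀, Function.update_self] at hj
      have hp : (∏ i ∈ Finset.univ.erase l, if z i = y i then (1:ℂ) else 0) = 0 :=
        Finset.prod_eq_zero (Finset.mem_erase.mpr ⟨hkl, Finset.mem_univ _⟩) (if_neg hzy)
      unfold siteOp
      rw [hp, mul_zero, mul_zero]
    · have hxz : x j ≠ z j := by
        rw [hz₀, Function.update_of_ne hjk] at hj
        exact hj.symm
      have hp : (∏ i ∈ Finset.univ.erase k, if x i = z i then (1:ℂ) else 0) = 0 :=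
        Finset.prod_eq_zero (Finset.mem_erase.mpr ⟨hjk, Finset.mem_univ _⟩) (if_neg hxz)
      unfold siteOp
      rw [hp, mul_zero, zero_mul]

lemma siteOp_comm (N : ℕ) (A B : Matrix (Fin 2) (Fin 2) ℂ) (k l : Fin N) (hkl : k ≠ l) :
    siteOp N A k * siteOp N B l = siteOp N B l * siteOp N A k := by
  rw [siteOp_mul_ne N A B k l hkl, siteOp_mul_ne N B A l k hkl.symm]
  funext x y
  rw [Finset.erase_right_comm]
  ring

lemma siteOp_one (N : ℕ) (k : Fin N) : siteOp N 1 k = 1 := by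
  funext x y
  unfold siteOp
  simp only [Matrix.one_apply]
  rw [Finset.mul_prod_erase Finset.univ
    (fun j => if x j = y j then (1:ℂ) else 0) (Finset.mem_univ k), Finset.prod_boole]
  simp [funext_iff]

lemma siteOp_add (N : ℕ) (A B : Matrix (Fin 2) (Fin 2) ℂ) (k : Fin N) :
    siteOp N (A + B) k = siteOp N A k + siteOp N B k := by
  funext x y
  simp [siteOp, Matrix.add_apply, add_mul]

lemma siteOp_smul (N : ℕ) (s : ℂ) (A : Matrix (Fin 2) (Fin 2) ℂ) (k : Fin N) :
    siteOp N (s • A) k = s • siteOp N A k := by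
  funext x y
  simp [siteOp, Matrix.smul_apply, mul_assoc]

lemma siteOp_conjTranspose (N : ℕ) (A : Matrix (Fin 2) (Fin 2) ℂ) (k : Fin N) :
    (siteOp N A k)ᴴ = siteOp N Aᴴ k := by
  funext x y
  simp only [Matrix.conjTranspose_apply, siteOp]
  rw [← starRingEnd_apply, map_mul, map_prod]
  congr 1
  exact Finset.prod_congr rfl fun j _ => by
    by_cases h : x j = y j
    · rw [if_pos h.symm, if_pos h, map_one]
    · rw [if_neg (fun hh => h hh.symm), if_neg h, map_zero]

lemma siteOp_sub (N : ℕ) (A B : Matrix (Fin 2) (Fin 2) ℂ) (k : Fin N) :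
    siteOp N (A - B) k = siteOp N A k - siteOp N B k := by
  funext x y
  simp [siteOp, Matrix.sub_apply, sub_mul]


lemma collSpin_mul (N : ℕ) (A B : Matrix (Fin 2) (Fin 2) ℂ) :
    collSpin N A * collSpin N B
      = ((1:ℂ)/4) • ∑ k : Fin N, ∑ l : Fin N, siteOp N A k * siteOp N B l := by
  unfold collSpin
  rw [smul_mul_assoc, mul_smul_comm, smul_smul, Finset.sum_mul_sum]
  norm_num

lemma collSpin_comm (N : ℕ) (A B : Matrix (Fin 2) (Fin 2) ℂ) :
    collSpin N A * collSpin N B - collSpin N B * collSpin N A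
      = ((1:ℂ)/2) • collSpin N (A * B - B * A) := by
  rw [collSpin_mul, collSpin_mul, ← smul_sub]
  have h1 : (∑ k : Fin N, ∑ l : Fin N, siteOp N B k * siteOp N A l)
      = ∑ k : Fin N, ∑ l : Fin N, siteOp N B l * siteOp N A k := Finset.sum_comm
  rw [h1, ← Finset.sum_sub_distrib]
  have h2 : ∀ k : Fin N,
      ((∑ l : Fin N, siteOp N A k * siteOp N B l) - ∑ l : Fin N, siteOp N B l * siteOp N A k)
        = siteOp N (A * B - B * A) k := by
    intro k
    rw [← Finset.sum_sub_distrib, Finset.sum_eq_single k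
      (fun l _ hl => by rw [siteOp_comm N A B k l (Ne.symm hl), sub_self])
      (by simp), siteOp_mul_same, siteOp_mul_same, ← siteOp_sub]
  rw [Finset.sum_congr rfl (fun k _ => h2 k)]
  unfold collSpin
  rw [smul_smul]
  norm_num



section NormLemmas
variable {ι : Type*} [Fintype ι] [DecidableEq ι] [Nonempty ι]

example : Nontrivial (EuclideanSpace ℂ ι) := inferInstance
example : NormOneClass (EuclideanSpace ℂ ι →L[ℂ] EuclideanSpace ℂ ι) := inferInstance

lemma norm_toCLM_le_one (M : Matrix ι ι ℂ) (h : Mᴴ * M = 1) :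
    ‖Matrix.toEuclideanCLM (𝕜 := ℂ) M‖ ≤ 1 := by
  set T := Matrix.toEuclideanCLM (𝕜 := ℂ) M with hT
  have h2 : star T * T = 1 := by
    rw [hT, ← map_star, ← map_mul, Matrix.star_eq_conjTranspose, h, map_one]
  have h3 := CStarRing.norm_star_mul_self (x := T)
  rw [h2, norm_one] at h3
  nlinarith [norm_nonneg T]

end NormLemmas

section CommBound
variable {R : Type*} [NormedRing R] [NormOneClass R]

lemma normpow (a : R) (K : ℝ) (hK : 0 ≤ K) (ha : ‖a‖ ≤ K) (n : ℕ) : ‖a ^ n‖ ≤ K ^ n := by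
  calc ‖a ^ n‖ ≤ ‖a‖ ^ n := norm_pow_le a n
    _ ≤ K ^ n := pow_le_pow_left₀ (norm_nonneg a) ha n

lemma comm_pow_left (a c : R) (K δ : ℝ) (hK : 0 ≤ K) (hδ : 0 ≤ δ)
    (ha : ‖a‖ ≤ K) (h : ‖a * c - c * a‖ ≤ δ) (n : ℕ) :
    ‖a ^ n * c - c * a ^ n‖ ≤ n * K ^ (n - 1) * δ := by
  induction n with
  | zero => simp
  | succ n ih =>
    have key : a ^ (n + 1) * c - c * a ^ (n + 1)
        = a ^ n * (a * c - c * a) + (a ^ n * c - c * a ^ n) * a := by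
      rw [pow_succ]; noncomm_ring
    calc ‖a ^ (n + 1) * c - c * a ^ (n + 1)‖
        ≤ ‖a ^ n * (a * c - c * a)‖ + ‖(a ^ n * c - c * a ^ n) * a‖ := by
          rw [key]; exact norm_add_le _ _
      _ ≤ ‖a ^ n‖ * ‖a * c - c * a‖ + ‖a ^ n * c - c * a ^ n‖ * ‖a‖ :=
          add_le_add (norm_mul_le _ _) (norm_mul_le _ _)
      _ ≤ K ^ n * δ + (n * K ^ (n - 1) * δ) * K := by
          refine add_le_add (mul_le_mul (normpow a K hK ha n) h (norm_nonneg _) (by positivity)) ?_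
          exact mul_le_mul ih ha (norm_nonneg a) (by positivity)
      _ ≤ (n + 1 : ℕ) * K ^ ((n + 1) - 1) * δ := by
          rcases Nat.eq_zero_or_pos n with hn | hn
          · subst hn; simp
          · have hKK : K ^ (n - 1) * K = K ^ n := by
              rw [← pow_succ, Nat.sub_add_cancel hn]
            push_cast
            have h2 : (n : ℝ) * K ^ (n - 1) * δ * K = (n : ℝ) * K ^ n * δ := by
              rw [← hKK]; ring
            have h3 : K ^ n * δ + (n : ℝ) * K ^ n * δ = ((n : ℝ) + 1) * K ^ n * δ := by ring
            linarith
end CommBound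

lemma comm_pow_pow {R : Type*} [NormedRing R] [NormOneClass R]
    (a b : R) (K ε : ℝ) (hK : 0 ≤ K) (hε : 0 ≤ ε)
    (ha : ‖a‖ ≤ K) (hb : ‖b‖ ≤ K) (h : ‖a * b - b * a‖ ≤ ε) (n m : ℕ) :
    ‖a ^ n * b ^ m - b ^ m * a ^ n‖ ≤ (n * K ^ (n - 1)) * ((m * K ^ (m - 1)) * ε) := by
  have h' : ‖b * a - a * b‖ ≤ ε := by rwa [norm_sub_rev]
  have h1 : ‖b ^ m * a - a * b ^ m‖ ≤ m * K ^ (m - 1) * ε :=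
    comm_pow_left b a K ε hK hε hb h' m
  have h1' : ‖a * b ^ m - b ^ m * a‖ ≤ m * K ^ (m - 1) * ε := by rwa [norm_sub_rev]
  have := comm_pow_left a (b ^ m) K (m * K ^ (m - 1) * ε) hK (by positivity) ha h1' n
  calc ‖a ^ n * b ^ m - b ^ m * a ^ n‖ ≤ n * K ^ (n - 1) * (m * K ^ (m - 1) * ε) := this
    _ = (n * K ^ (n - 1)) * ((m * K ^ (m - 1)) * ε) := by ring


lemma pauliX_star : pauliXᴴ * pauliX = 1 := by
  ext i j
  fin_cases i <;> fin_cases j <;>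
    simp [pauliX, Matrix.mul_apply, Fin.sum_univ_two, Matrix.one_apply]

lemma pauliY_star : pauliYᴴ * pauliY = 1 := by
  ext i j
  fin_cases i <;> fin_cases j <;>
    simp [pauliY, Matrix.mul_apply, Fin.sum_univ_two, Matrix.one_apply, Complex.ext_iff]

lemma pauliZ_star : pauliZᴴ * pauliZ = 1 := by
  ext i j
  fin_cases i <;> fin_cases j <;>
    simp [pauliZ, Matrix.mul_apply, Fin.sum_univ_two, Matrix.one_apply]

lemma pauli_comm_eq :
    (pauliX - Complex.I • pauliY) * (pauliX + Complex.I • pauliY)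
      - (pauliX + Complex.I • pauliY) * (pauliX - Complex.I • pauliY)
      = (-4 : ℂ) • pauliZ := by
  ext i j
  fin_cases i <;> fin_cases j <;>
    simp [pauliX, pauliY, pauliZ, Matrix.mul_apply, Fin.sum_univ_two, Complex.ext_iff] <;> ring

section Kron
variable {p q : Type*} [Fintype p] [Fintype q] [DecidableEq p] [DecidableEq q]

lemma kron_sub (A B : Matrix p p ℂ) :
    (A - B) ⊗ₖ (1 : Matrix q q ℂ) = A ⊗ₖ 1 - B ⊗ₖ 1 := by
  ext ⟨i1, i2⟩ ⟨j1, j2⟩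
  simp [Matrix.kroneckerMap_apply, Matrix.sub_apply, sub_mul]

lemma kron_add (A B : Matrix p p ℂ) :
    (A + B) ⊗ₖ (1 : Matrix q q ℂ) = A ⊗ₖ 1 + B ⊗ₖ 1 := by
  ext ⟨i1, i2⟩ ⟨j1, j2⟩
  simp [Matrix.kroneckerMap_apply, Matrix.add_apply, add_mul]

lemma kron_smul (s : ℂ) (A : Matrix p p ℂ) :
    (s • A) ⊗ₖ (1 : Matrix q q ℂ) = s • (A ⊗ₖ 1) := by
  ext ⟨i1, i2⟩ ⟨j1, j2⟩
  simp [Matrix.kroneckerMap_apply, Matrix.smul_apply, mul_assoc]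

lemma kron_sum {κ : Type*} (s : Finset κ) (f : κ → Matrix p p ℂ) :
    (∑ k ∈ s, f k) ⊗ₖ (1 : Matrix q q ℂ) = ∑ k ∈ s, (f k ⊗ₖ 1) := by
  ext ⟨i1, i2⟩ ⟨j1, j2⟩
  simp [Matrix.kroneckerMap_apply, Matrix.sum_apply, Finset.sum_mul]

lemma kron_mul (A B : Matrix p p ℂ) :
    (A ⊗ₖ (1 : Matrix q q ℂ)) * (B ⊗ₖ 1) = (A * B) ⊗ₖ 1 := by
  rw [← Matrix.mul_kronecker_mul, one_mul]

lemma kron_one : ((1 : Matrix p p ℂ) ⊗ₖ (1 : Matrix q q ℂ)) = 1 :=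
  Matrix.one_kronecker_one

lemma kron_conjTranspose (A : Matrix p p ℂ) :
    (A ⊗ₖ (1 : Matrix q q ℂ))ᴴ = Aᴴ ⊗ₖ 1 := by
  ext ⟨i1, i2⟩ ⟨j1, j2⟩
  simp only [Matrix.conjTranspose_apply, Matrix.kroneckerMap_apply, Matrix.one_apply]
  by_cases h : i2 = j2
  · simp [h]
  · rw [if_neg (fun hh => h hh.symm), if_neg h, mul_zero, star_zero, mul_zero]

end Kron

lemma norm_collSpin_kron_le (N : ℕ) (A : Matrix (Fin 2) (Fin 2) ℂ) (hA : Aᴴ * A = 1) :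
    ‖Matrix.toEuclideanCLM (𝕜 := ℂ)
        (collSpin N A ⊗ₖ (1 : Matrix (Fin N → Fin 2) (Fin N → Fin 2) ℂ))‖ ≤ N / 2 := by
  unfold collSpin
  rw [kron_smul, kron_sum, map_smul, map_sum]
  rw [norm_smul ((1:ℂ)/2) (∑ k : Fin N, Matrix.toEuclideanCLM (𝕜 := ℂ)
    (siteOp N A k ⊗ₖ (1 : Matrix (Fin N → Fin 2) (Fin N → Fin 2) ℂ)))]
  have hterm : ∀ k : Fin N, ‖Matrix.toEuclideanCLM (𝕜 := ℂ)
      (siteOp N A k ⊗ₖ (1 : Matrix (Fin N → Fin 2) (Fin N → Fin 2) ℂ))‖ ≤ 1 := by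
    intro k
    refine norm_toCLM_le_one _ ?_
    rw [kron_conjTranspose, kron_mul, siteOp_conjTranspose, siteOp_mul_same, hA, siteOp_one,
      kron_one]
  calc ‖(1/2 : ℂ)‖ * ‖∑ k : Fin N, Matrix.toEuclideanCLM (𝕜 := ℂ)
          (siteOp N A k ⊗ₖ (1 : Matrix (Fin N → Fin 2) (Fin N → Fin 2) ℂ))‖
      ≤ (1/2) * ∑ k : Fin N, (1 : ℝ) := by
        refine mul_le_mul (le_of_eq (by norm_num)) ?_ (norm_nonneg _) (by norm_num)
        exact le_trans (norm_sum_le _ _) (Finset.sum_le_sum fun k _ => hterm k)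
    _ = N / 2 := by simp; ring


lemma collSpin_smulL (N : ℕ) (s : ℂ) (A : Matrix (Fin 2) (Fin 2) ℂ) :
    collSpin N (s • A) = s • collSpin N A := by
  unfold collSpin
  rw [Finset.sum_congr rfl (fun k _ => siteOp_smul N s A k), ← Finset.smul_sum, smul_comm]

lemma collSpin_addL (N : ℕ) (A B : Matrix (Fin 2) (Fin 2) ℂ) :
    collSpin N (A + B) = collSpin N A + collSpin N B := by
  unfold collSpin
  rw [Finset.sum_congr rfl (fun k _ => siteOp_add N A B k), Finset.sum_add_distrib, smul_add]

lemma collSpin_subL (N : ℕ) (A B : Matrix (Fin 2) (Fin 2) ℂ) :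
    collSpin N (A - B) = collSpin N A - collSpin N B := by
  unfold collSpin
  rw [Finset.sum_congr rfl (fun k _ => siteOp_sub N A B k), Finset.sum_sub_distrib, smul_sub]

lemma Splus_eq (N : ℕ) : Splus N = collSpin N (pauliX + Complex.I • pauliY) := by
  rw [collSpin_addL, collSpin_smulL]; rfl

lemma Sminus_eq (N : ℕ) : Sminus N = collSpin N (pauliX - Complex.I • pauliY) := by
  rw [collSpin_subL, collSpin_smulL]; rfl

lemma commSS (N : ℕ) :
    Sminus N * Splus N - Splus N * Sminus N = (-2 : ℂ) • Sz N := by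
  rw [Sminus_eq, Splus_eq, collSpin_comm, pauli_comm_eq, collSpin_smulL, smul_smul]
  show _ = (-2 : ℂ) • collSpin N pauliZ
  norm_num



/-- For every n, m ∈ ℕ and 𝔠 > 0 there is C > 0 (depending only on n, m, 𝔠) with
‖[(E_-^N)^n, (E_+^N)^m]‖ ≤ C/N for all N ≥ 1. -/
theorem phase_operator_commutator_bound (n m : ℕ) (c : ℝ) (hc : 0 < c) :
    ∃ C : ℝ, 0 < C ∧ ∀ N : ℕ, 1 ≤ N →
      opNorm ((Eminus N c) ^ n * (Eplus N c) ^ m - (Eplus N c) ^ m * (Eminus N c) ^ n)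
        ≤ C / N := by
  refine ⟨(n * (1/c) ^ (n-1)) * ((m * (1/c) ^ (m-1)) * (1/c^2)) + 1, by positivity, ?_⟩
  intro N hN
  have hNR : (0:ℝ) < (N:ℝ) := by exact_mod_cast Nat.lt_of_lt_of_le Nat.zero_lt_one hN
  have hu : ‖((c : ℂ) * (N:ℕ))⁻¹‖ = (c * N)⁻¹ := by
    rw [norm_inv, norm_mul, Complex.norm_real, Complex.norm_natCast,
      Real.norm_of_nonneg hc.le]
  have hSz : ‖Matrix.toEuclideanCLM (𝕜 := ℂ)
      (Sz N ⊗ₖ (1 : Matrix (Fin N → Fin 2) (Fin N → Fin 2) ℂ))‖ ≤ N / 2 :=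
    norm_collSpin_kron_le N pauliZ pauliZ_star
  have hSp : ‖Matrix.toEuclideanCLM (𝕜 := ℂ)
      (Splus N ⊗ₖ (1 : Matrix (Fin N → Fin 2) (Fin N → Fin 2) ℂ))‖ ≤ N := by
    have hx := norm_collSpin_kron_le N pauliX pauliX_star
    have hy := norm_collSpin_kron_le N pauliY pauliY_star
    have hrw : Splus N ⊗ₖ (1 : Matrix (Fin N → Fin 2) (Fin N → Fin 2) ℂ)
        = (collSpin N pauliX ⊗ₖ 1) + Complex.I • (collSpin N pauliY ⊗ₖ 1) := by
      show (Sx N + Complex.I • Sy N) ⊗ₖ _ = _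
      rw [kron_add, kron_smul]; rfl
    rw [hrw, map_add, map_smul ((Matrix.toEuclideanCLM (𝕜 := ℂ)) : _ ≃⋆ₐ[ℂ] _)]
    refine le_trans (norm_add_le _ _) ?_
    have hIy : ‖Complex.I • Matrix.toEuclideanCLM (𝕜 := ℂ)
        (collSpin N pauliY ⊗ₖ (1 : Matrix (Fin N → Fin 2) (Fin N → Fin 2) ℂ))‖ ≤ (N:ℝ)/2 := by
      rw [norm_smul Complex.I (Matrix.toEuclideanCLM (𝕜 := ℂ)
        (collSpin N pauliY ⊗ₖ (1 : Matrix (Fin N → Fin 2) (Fin N → Fin 2) ℂ)))]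
      simpa using hy
    linarith
  have hSm : ‖Matrix.toEuclideanCLM (𝕜 := ℂ)
      (Sminus N ⊗ₖ (1 : Matrix (Fin N → Fin 2) (Fin N → Fin 2) ℂ))‖ ≤ N := by
    have hx := norm_collSpin_kron_le N pauliX pauliX_star
    have hy := norm_collSpin_kron_le N pauliY pauliY_star
    have hrw : Sminus N ⊗ₖ (1 : Matrix (Fin N → Fin 2) (Fin N → Fin 2) ℂ)
        = (collSpin N pauliX ⊗ₖ 1) - Complex.I • (collSpin N pauliY ⊗ₖ 1) := by
      show (Sx N - Complex.I • Sy N) ⊗ₖ _ = _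
      rw [kron_sub, kron_smul]; rfl
    rw [hrw, map_sub, map_smul ((Matrix.toEuclideanCLM (𝕜 := ℂ)) : _ ≃⋆ₐ[ℂ] _)]
    refine le_trans (norm_sub_le _ _) ?_
    have hIy : ‖Complex.I • Matrix.toEuclideanCLM (𝕜 := ℂ)
        (collSpin N pauliY ⊗ₖ (1 : Matrix (Fin N → Fin 2) (Fin N → Fin 2) ℂ))‖ ≤ (N:ℝ)/2 := by
      rw [norm_smul Complex.I (Matrix.toEuclideanCLM (𝕜 := ℂ)
        (collSpin N pauliY ⊗ₖ (1 : Matrix (Fin N → Fin 2) (Fin N → Fin 2) ℂ)))]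
      simpa using hy
    linarith
  have hcN : (0:ℝ) < c * N := by positivity
  have hEm : ‖Matrix.toEuclideanCLM (𝕜 := ℂ) (Eminus N c)‖ ≤ 1 / c := by
    unfold Eminus
    rw [map_smul ((Matrix.toEuclideanCLM (𝕜 := ℂ)) : _ ≃⋆ₐ[ℂ] _),
      norm_smul (((c : ℂ) * N)⁻¹) (Matrix.toEuclideanCLM (𝕜 := ℂ)
        (Sminus N ⊗ₖ (1 : Matrix (Fin N → Fin 2) (Fin N → Fin 2) ℂ))), hu]
    have := mul_le_mul_of_nonneg_left hSm (le_of_lt (inv_pos.mpr hcN))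
    refine le_trans this (le_of_eq ?_)
    field_simp
  have hEp : ‖Matrix.toEuclideanCLM (𝕜 := ℂ) (Eplus N c)‖ ≤ 1 / c := by
    unfold Eplus
    rw [map_smul ((Matrix.toEuclideanCLM (𝕜 := ℂ)) : _ ≃⋆ₐ[ℂ] _),
      norm_smul (((c : ℂ) * N)⁻¹) (Matrix.toEuclideanCLM (𝕜 := ℂ)
        (Splus N ⊗ₖ (1 : Matrix (Fin N → Fin 2) (Fin N → Fin 2) ℂ))), hu]
    have := mul_le_mul_of_nonneg_left hSp (le_of_lt (inv_pos.mpr hcN))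
    refine le_trans this (le_of_eq ?_)
    field_simp
  have hmat : Eminus N c * Eplus N c - Eplus N c * Eminus N c
      = (((c : ℂ) * N)⁻¹ * ((c : ℂ) * N)⁻¹ * (-2)) • (Sz N ⊗ₖ
          (1 : Matrix (Fin N → Fin 2) (Fin N → Fin 2) ℂ)) := by
    unfold Eminus Eplus
    rw [smul_mul_smul_comm, smul_mul_smul_comm, ← smul_sub, kron_mul, kron_mul, ← kron_sub,
      commSS, kron_smul, smul_smul]
  have hcomm : ‖Matrix.toEuclideanCLM (𝕜 := ℂ) (Eminus N c) *
        Matrix.toEuclideanCLM (𝕜 := ℂ) (Eplus N c)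
      - Matrix.toEuclideanCLM (𝕜 := ℂ) (Eplus N c) *
        Matrix.toEuclideanCLM (𝕜 := ℂ) (Eminus N c)‖ ≤ (1/c^2) * (1/N) := by
    rw [← map_mul, ← map_mul, ← map_sub, hmat,
      map_smul ((Matrix.toEuclideanCLM (𝕜 := ℂ)) : _ ≃⋆ₐ[ℂ] _),
      norm_smul (((c : ℂ) * N)⁻¹ * ((c : ℂ) * N)⁻¹ * (-2)) (Matrix.toEuclideanCLM (𝕜 := ℂ)
        (Sz N ⊗ₖ (1 : Matrix (Fin N → Fin 2) (Fin N → Fin 2) ℂ)))]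
    have hn : ‖((c : ℂ) * N)⁻¹ * ((c : ℂ) * N)⁻¹ * (-2 : ℂ)‖ = (c*N)⁻¹ * (c*N)⁻¹ * 2 := by
      rw [norm_mul, norm_mul, hu, norm_neg]
      norm_num
    rw [hn]
    have h1 := mul_le_mul_of_nonneg_left hSz
      (show (0:ℝ) ≤ (c*N)⁻¹ * (c*N)⁻¹ * 2 by positivity)
    refine le_trans h1 (le_of_eq ?_)
    field_simp
  have key := comm_pow_pow (Matrix.toEuclideanCLM (𝕜 := ℂ) (Eminus N c))
    (Matrix.toEuclideanCLM (𝕜 := ℂ) (Eplus N c)) (1/c) ((1/c^2) * (1/N))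
    (by positivity) (by positivity) hEm hEp hcomm n m
  have hfin : opNorm ((Eminus N c) ^ n * (Eplus N c) ^ m
      - (Eplus N c) ^ m * (Eminus N c) ^ n)
      = ‖(Matrix.toEuclideanCLM (𝕜 := ℂ) (Eminus N c)) ^ n *
          (Matrix.toEuclideanCLM (𝕜 := ℂ) (Eplus N c)) ^ m
        - (Matrix.toEuclideanCLM (𝕜 := ℂ) (Eplus N c)) ^ m *
          (Matrix.toEuclideanCLM (𝕜 := ℂ) (Eminus N c)) ^ n‖ := by
    unfold opNorm
    rw [map_sub, map_mul, map_mul, map_pow, map_pow]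
  rw [hfin]
  refine le_trans key ?_
  set a : ℝ := (n * (1/c) ^ (n-1)) * ((m * (1/c) ^ (m-1)) * (1/c^2)) with ha
  have h2 : (n : ℝ) * (1/c) ^ (n-1) * ((m : ℝ) * (1/c) ^ (m-1) * (1/c^2 * (1/(N:ℝ))))
      = a / N := by rw [ha]; ring
  rw [h2]
  have h3 : a ≤ a + 1 := by linarith
  exact (div_le_div_iff_of_pos_right hNR).mpr h3
end

section
/- Fix β_c > 0 and for each β > β_c let Δ(β) be the unique positive solution of 2Δ = tanh(2βΔ/β_c). Then Δ(β) → 1/2 as β → ∞, and lim_{β→β_c⁺} Δ(β)/√(1 − β_c/β) = √3/2; equivalently, writing T = 1/β and T_c = 1/β_c, the gap behaves as Δ(T) ≈ √3·Δ(0)·(1 − T/T_c)^{1/2} near the critical temperature, with Δ(0) = 1/2. -/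
/-!
With `y = 2βΔ/β_c` and `r = β_c/β < 1` the gap equation becomes `tanh y = r y`, `y > 0`.
The Taylor bounds `y - y³/3 ≤ tanh y ≤ y - y³/3 + 2y⁵/15` on `[0, ∞)` pin `y²` between
`3(1 - r)` and `3(1 - r) + 26(1 - r)²` once `r ≥ 4/5`, so `y²/(1 - r) → 3` as `β → β_c⁺`, and
`Δ/√(1 - r) = (r/2)·√(y²/(1 - r)) → √3/2`. As `β → ∞`, the lower bound gives `y ≥ 1`, hence
`r y = tanh y ≥ tanh 1`, so `y ≥ (β/β_c) tanh 1 → ∞` and `2Δ = tanh y → 1`.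
-/

open Filter Topology

theorem le_of_hasDerivAt_le_of_nonneg {f g f' g' : ℝ → ℝ} (hf : ∀ x, HasDerivAt f (f' x) x)
    (hg : ∀ x, HasDerivAt g (g' x) x) (h₀ : f 0 ≤ g 0) (h' : ∀ x, 0 < x → f' x ≤ g' x)
    {x : ℝ} (hx : 0 ≤ x) : f x ≤ g x := by
  have hd : ∀ x, HasDerivAt (g - f) (g' x - f' x) x := fun x => (hg x).sub (hf x)
  have hmono : MonotoneOn (g - f) (Set.Ici 0) := by
    refine monotoneOn_of_deriv_nonneg (convex_Ici 0)
      (fun x _ => (hd x).continuousAt.continuousWithinAt)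
      (fun x _ => (hd x).differentiableAt.differentiableWithinAt) fun x hx => ?_
    rw [interior_Ici] at hx
    rw [(hd x).deriv]
    exact sub_nonneg.2 (h' x hx)
  have h := hmono (Set.mem_Ici.2 le_rfl) hx hx
  simp only [Pi.sub_apply] at h
  linarith

namespace Real

theorem hasDerivAt_tanh (x : ℝ) : HasDerivAt tanh (1 - tanh x ^ 2) x := by
  have hcosh : cosh x ≠ 0 := (cosh_pos x).ne'
  have h := (hasDerivAt_sinh x).div (hasDerivAt_cosh x) hcosh
  rw [show tanh = sinh / cosh from funext fun y => tanh_eq_sinh_div_cosh y]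
  refine h.congr_deriv ?_
  rw [Pi.div_apply]
  field_simp

theorem strictMono_tanh : StrictMono tanh :=
  strictMono_of_deriv_pos fun x => by
    rw [(hasDerivAt_tanh x).deriv]
    linarith [tanh_sq_lt_one x]

theorem tanh_eq_one_sub (x : ℝ) : tanh x = 1 - 2 / (exp (2 * x) + 1) := by
  rw [tanh_eq, show 2 * x = x + x by ring, exp_add, exp_neg]
  field_simp
  ring

theorem tendsto_tanh_atTop : Tendsto tanh atTop (𝓝 1) := by
  have hexp : Tendsto (fun x => exp (2 * x) + 1) atTop atTop :=
    tendsto_atTop_add_const_right _ 1 <|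
      tendsto_exp_atTop.comp (tendsto_id.const_mul_atTop two_pos)
  have h := (tendsto_const_nhds (x := (1 : ℝ))).sub (hexp.inv_tendsto_atTop.const_mul 2)
  rw [mul_zero, sub_zero] at h
  exact h.congr fun x => by rw [tanh_eq_one_sub, div_eq_mul_inv, Pi.inv_apply]

theorem tanh_nonneg {x : ℝ} (hx : 0 ≤ x) : 0 ≤ tanh x :=
  tanh_zero ▸ strictMono_tanh.monotone hx

theorem tanh_le_self {x : ℝ} (hx : 0 ≤ x) : tanh x ≤ x :=
  le_of_hasDerivAt_le_of_nonneg hasDerivAt_tanh hasDerivAt_id' (by simp)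
    (fun y _ => by nlinarith [sq_nonneg (tanh y)]) hx

theorem sub_pow_three_div_three_le_tanh {x : ℝ} (hx : 0 ≤ x) : x - x ^ 3 / 3 ≤ tanh x := by
  refine le_of_hasDerivAt_le_of_nonneg (f' := fun y => 1 - y ^ 2)
    (fun y => ((hasDerivAt_id' y).sub ((hasDerivAt_pow 3 y).div_const 3)).congr_deriv (by ring))
    hasDerivAt_tanh (by simp) (fun y hy => ?_) hx
  nlinarith [tanh_nonneg hy.le, tanh_le_self hy.le]

theorem tanh_le_sub_pow_three_div_three_add {x : ℝ} (hx : 0 ≤ x) :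
    tanh x ≤ x - x ^ 3 / 3 + 2 / 15 * x ^ 5 := by
  refine le_of_hasDerivAt_le_of_nonneg hasDerivAt_tanh (g' := fun y => 1 - y ^ 2 + 2 / 3 * y ^ 4)
    (fun y => (((hasDerivAt_id' y).sub ((hasDerivAt_pow 3 y).div_const 3)).add
      ((hasDerivAt_pow 5 y).const_mul (2 / 15))).congr_deriv (by ring))
    (by simp) (fun y hy => ?_) hx
  -- needs `y² - 2y⁴/3 ≤ tanh² y`: square the cubic bound where its left side is nonnegative
  rcases le_total (y ^ 2) 3 with hy3 | hy3
  · have h := sub_pow_three_div_three_le_tanh hy.le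
    have hc : 0 ≤ y - y ^ 3 / 3 := by nlinarith
    nlinarith [mul_le_mul h h hc (hc.trans h), pow_two_nonneg (y ^ 3)]
  · nlinarith [sq_nonneg (tanh y), sq_nonneg y]

end Real

section ReducedGapEquation

open Real

variable {r y : ℝ}

theorem three_mul_one_sub_le_sq (hy : 0 < y) (h : tanh y = r * y) : 3 * (1 - r) ≤ y ^ 2 := by
  have h3 := sub_pow_three_div_three_le_tanh hy.le
  rw [h] at h3
  nlinarith

theorem sq_le_three_mul_one_sub_add (hy : 0 < y) (h : tanh y = r * y) (hr : 4 / 5 ≤ r) :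
    y ^ 2 ≤ 3 * (1 - r) + 26 * (1 - r) ^ 2 := by
  -- `tanh y < 1` gives `y < 5/4`, which turns the quintic bound into `y² ≤ 8(1 - r)`.
  have hy54 : y < 5 / 4 := by nlinarith [tanh_lt_one y]
  have h5 := tanh_le_sub_pow_three_div_three_add hy.le
  rw [h] at h5
  have hq : y ^ 2 - 2 / 5 * (y ^ 2) ^ 2 ≤ 3 * (1 - r) := by nlinarith
  have hq8 : y ^ 2 ≤ 8 * (1 - r) := by
    have hy2 : y ^ 2 < 25 / 16 := by nlinarith
    nlinarith [mul_pos (sub_pos.2 hy2) (pow_pos hy 2)]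
  nlinarith [pow_le_pow_left₀ (sq_nonneg y) hq8 2]

theorem div_le_of_tanh_eq_mul (hy : 0 < y) (h : tanh y = r * y) (hr₀ : 0 < r) (hr : r ≤ 1 / 2) :
    tanh 1 / r ≤ y := by
  have hy1 : 1 ≤ y := by nlinarith [three_mul_one_sub_le_sq hy h]
  rw [div_le_iff₀ hr₀, mul_comm, ← h]
  exact strictMono_tanh.monotone hy1

end ReducedGapEquation

section Gap

open Real

variable {βc : ℝ} {Δ : ℝ → ℝ}

theorem tanh_eq_mul_of_gap_eq {β d : ℝ} (hβc : 0 < βc) (hβ : βc < β)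
    (hd : 0 < d ∧ 2 * d = tanh (2 * β * d / βc)) :
    0 < 2 * β * d / βc ∧ tanh (2 * β * d / βc) = βc / β * (2 * β * d / βc) := by
  have hβ₀ : 0 < β := hβc.trans hβ
  refine ⟨by have := hd.1; positivity, ?_⟩
  rw [← hd.2]
  field_simp

theorem tendsto_gap_atTop (hβc : 0 < βc)
    (hΔ : ∀ β, βc < β → 0 < Δ β ∧ 2 * Δ β = tanh (2 * β * Δ β / βc)) :
    Tendsto Δ atTop (𝓝 (1 / 2)) := by
  have htanh₁ : 0 < tanh 1 := by simpa using strictMono_tanh one_pos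
  have hlow : Tendsto (fun β => tanh (β / βc * tanh 1) / 2) atTop (𝓝 (1 / 2)) :=
    (tendsto_tanh_atTop.comp ((tendsto_id.atTop_div_const hβc).atTop_mul_const htanh₁)).div_const 2
  refine tendsto_of_tendsto_of_tendsto_of_le_of_le' hlow tendsto_const_nhds ?_ ?_
  · filter_upwards [eventually_gt_atTop (2 * βc)] with β hβ
    have hβ' : βc < β := by linarith
    have hβ₀ : 0 < β := hβc.trans hβ'
    obtain ⟨hy₀, hy⟩ := tanh_eq_mul_of_gap_eq hβc hβ' (hΔ β hβ')
    have hy_ge := div_le_of_tanh_eq_mul hy₀ hy (by positivity) (by rw [div_le_iff₀ hβ₀]; linarith)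
    rw [div_div_eq_mul_div, mul_div_assoc, mul_comm] at hy_ge
    linarith [strictMono_tanh.monotone hy_ge, (hΔ β hβ').2]
  · filter_upwards [eventually_gt_atTop βc] with β hβ
    linarith [(hΔ β hβ).2, tanh_lt_one (2 * β * Δ β / βc)]

theorem tendsto_gap_div_sqrt_nhdsGT (hβc : 0 < βc)
    (hΔ : ∀ β, βc < β → 0 < Δ β ∧ 2 * Δ β = tanh (2 * β * Δ β / βc)) :
    Tendsto (fun β => Δ β / √(1 - βc / β)) (𝓝[>] βc) (𝓝 (√3 / 2)) := by
  set y := fun β => 2 * β * Δ β / βc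
  have hr : Tendsto (fun β => βc / β) (𝓝[>] βc) (𝓝 1) := by
    have h : Tendsto (fun β => βc / β) (𝓝 βc) (𝓝 (βc / βc)) :=
      tendsto_const_nhds.div tendsto_id hβc.ne'
    rw [div_self hβc.ne'] at h
    exact h.mono_left nhdsWithin_le_nhds
  have hs : Tendsto (fun β => 1 - βc / β) (𝓝[>] βc) (𝓝 0) := by
    simpa using (tendsto_const_nhds (x := (1 : ℝ))).sub hr
  have hev : ∀ᶠ β in 𝓝[>] βc, βc < β ∧ 4 / 5 ≤ βc / β :=
    Eventually.and self_mem_nhdsWithin (hr.eventually (eventually_ge_nhds (by norm_num)))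
  have hbounds : ∀ᶠ β in 𝓝[>] βc,
      3 ≤ y β ^ 2 / (1 - βc / β) ∧ y β ^ 2 / (1 - βc / β) ≤ 3 + 26 * (1 - βc / β) := by
    filter_upwards [hev] with β ⟨hβ, hr₄₅⟩
    obtain ⟨hy₀, hy⟩ := tanh_eq_mul_of_gap_eq hβc hβ (hΔ β hβ)
    have hs₀ : 0 < 1 - βc / β := sub_pos.2 ((div_lt_one (hβc.trans hβ)).2 hβ)
    rw [le_div_iff₀ hs₀, div_le_iff₀ hs₀]
    exact ⟨three_mul_one_sub_le_sq hy₀ hy, by nlinarith [sq_le_three_mul_one_sub_add hy₀ hy hr₄₅]⟩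
  have hq : Tendsto (fun β => y β ^ 2 / (1 - βc / β)) (𝓝[>] βc) (𝓝 3) := by
    have hup : Tendsto (fun β => 3 + 26 * (1 - βc / β)) (𝓝[>] βc) (𝓝 3) := by
      simpa using (hs.const_mul 26).const_add 3
    exact tendsto_of_tendsto_of_tendsto_of_le_of_le' tendsto_const_nhds hup
      (hbounds.mono fun _ h => h.1) (hbounds.mono fun _ h => h.2)
  have hlim := (hr.div_const 2).mul hq.sqrt
  rw [one_div_mul_eq_div] at hlim
  refine hlim.congr' ?_
  filter_upwards [self_mem_nhdsWithin] with β hβ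
  have hβ₀ : β ≠ 0 := (hβc.trans hβ).ne'
  have hy₀ : 0 < y β := (tanh_eq_mul_of_gap_eq hβc hβ (hΔ β hβ)).1
  rw [sqrt_div' _ (sub_pos.2 ((div_lt_one (hβc.trans hβ)).2 hβ)).le, sqrt_sq hy₀.le]
  simp only [y]
  field_simp

end Gap

/-- Let Δ(β) be the unique positive solution of `2Δ = tanh(2βΔ/β_c)` for β > β_c. Then
Δ(β) → 1/2 as β → ∞ (i.e. Δ(0) = 1/2), and Δ(β)/√(1 − β_c/β) → √3/2 as β → β_c⁺;
equivalently Δ(T) ≈ √3·Δ(0)·(1 − T/T_c)^{1/2} near the critical temperature. -/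
theorem gap_asymptotics (βc : ℝ) (hβc : 0 < βc) (Δ : ℝ → ℝ)
    (hΔ : ∀ β, βc < β → 0 < Δ β ∧ 2 * Δ β = Real.tanh (2 * β * Δ β / βc)) :
    Tendsto Δ atTop (𝓝 (1 / 2)) ∧
    Tendsto (fun β => Δ β / Real.sqrt (1 - βc / β)) (𝓝[>] βc) (𝓝 (Real.sqrt 3 / 2)) :=
  ⟨tendsto_gap_atTop hβc hΔ, tendsto_gap_div_sqrt_nhdsGT hβc hΔ⟩
end
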